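/- Let K ⊆ ℂ^n be a compact set with a basis of Stein neighborhoods, let f ∈ H_loc(K, ℂ^m), and let σ = {σ_1, …, σ_k} be a finite subset of K. Then there exist an integer N ≥ 1, an open set V ⊆ ℂ^N containing 0, and a map G : K × V → ℂ^m such that: (1) G is continuous on K × V, G is holomorphic on (interior of K) × V, and for every z ∈ K the map v ↦ G(z, v) is holomorphic on V; (2) G(z, 0) = f(z) for all z ∈ K, and G(z, v) = f(z) for all z ∈ σ and v ∈ V; (3) for every z ∈ K \ σ and every v ∈ V, the derivative of the map v ↦ G(z, v) at v, as a ℂ-linear map ℂ^N → ℂ^m, is surjective. -/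

import Mathlib

noncomputable section

/-- `u` is plurisubharmonic on `Ω ⊆ ℂ^ι`: upper semicontinuous on `Ω` and satisfying the
sub-mean value inequality over every closed complex disc contained in `Ω`. -/
def Psh {ι : Type*} [Fintype ι] (Ω : Set (EuclideanSpace ℂ ι))
    (u : EuclideanSpace ℂ ι → ℝ) : Prop :=
  UpperSemicontinuousOn u Ω ∧
    ∀ a ∈ Ω, ∀ v : EuclideanSpace ℂ ι, ∀ r : ℝ, 0 < r →
      (∀ w : ℂ, ‖w‖ ≤ r → a + w • v ∈ Ω) →
      u a ≤ (1 / (2 * Real.pi)) *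
        ∫ θ in (0:ℝ)..(2 * Real.pi),
          u (a + ((r : ℂ) * Complex.exp (θ * Complex.I)) • v)

/-- `u` is continuous and strictly plurisubharmonic on the open set `Ω`. -/
def StrictPsh {ι : Type*} [Fintype ι] (Ω : Set (EuclideanSpace ℂ ι))
    (u : EuclideanSpace ℂ ι → ℝ) : Prop :=
  ContinuousOn u Ω ∧
    ∀ a ∈ Ω, ∃ B, IsOpen B ∧ a ∈ B ∧ B ⊆ Ω ∧ ∃ c > (0:ℝ),
      Psh B (fun z => u z - c * ‖z‖ ^ 2)

/-- An open set `Ω ⊆ ℂ^ι` is Stein: it carries a continuous strictly plurisubharmonic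
exhaustion function. -/
def IsSteinOpen {ι : Type*} [Fintype ι] (Ω : Set (EuclideanSpace ℂ ι)) : Prop :=
  IsOpen Ω ∧ ∃ u, StrictPsh Ω u ∧ ∀ t : ℝ, IsCompact {z | z ∈ Ω ∧ u z ≤ t}

/-- `L` has a basis of Stein neighborhoods. -/
def HasSteinBasis {ι : Type*} [Fintype ι] (L : Set (EuclideanSpace ℂ ι)) : Prop :=
  ∀ U, IsOpen U → L ⊆ U → ∃ Ω, IsSteinOpen Ω ∧ L ⊆ Ω ∧ Ω ⊆ U

/-- `f ∈ A(K, ℂ^κ)`: continuous on `K` and holomorphic on the interior of `K`. -/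
def MemA {ι κ : Type*} [Fintype ι] [Fintype κ] (K : Set (EuclideanSpace ℂ ι))
    (f : EuclideanSpace ℂ ι → EuclideanSpace ℂ κ) : Prop :=
  ContinuousOn f K ∧ DifferentiableOn ℂ f (interior K)

/-- `f ∈ H(K, ℂ^κ)`: continuous on `K` and uniformly approximable on `K` by maps
holomorphic on open neighborhoods of `K`. -/
def MemH {ι κ : Type*} [Fintype ι] [Fintype κ] (K : Set (EuclideanSpace ℂ ι))
    (f : EuclideanSpace ℂ ι → EuclideanSpace ℂ κ) : Prop :=
  ContinuousOn f K ∧ ∀ ε > (0:ℝ), ∃ W, IsOpen W ∧ K ⊆ W ∧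
    ∃ g, DifferentiableOn ℂ g W ∧ ∀ z ∈ K, ‖g z - f z‖ < ε

/-- `f ∈ H_loc(K, ℂ^κ)`: continuous on `K`, and every point of `K` has an open neighborhood
`U` such that `f` is uniformly approximable on `K ∩ closure U` by maps holomorphic on
open neighborhoods of `K ∩ closure U`. -/
def MemHloc {ι κ : Type*} [Fintype ι] [Fintype κ] (K : Set (EuclideanSpace ℂ ι))
    (f : EuclideanSpace ℂ ι → EuclideanSpace ℂ κ) : Prop :=
  ContinuousOn f K ∧ ∀ z ∈ K, ∃ U, IsOpen U ∧ z ∈ U ∧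
    ∀ ε > (0:ℝ), ∃ W, IsOpen W ∧ K ∩ closure U ⊆ W ∧
      ∃ g, DifferentiableOn ℂ g W ∧ ∀ w ∈ K ∩ closure U, ‖g w - f w‖ < ε

/-- The point `(z, w)` of `ℂ^ι × ℂ^κ`, viewed in the Euclidean space `ℂ^(ι ⊕ κ) ≅ ℂ^(|ι|+|κ|)`. -/
def graphPt {ι κ : Type*} [Fintype ι] [Fintype κ] (z : EuclideanSpace ℂ ι)
    (w : EuclideanSpace ℂ κ) : EuclideanSpace ℂ (ι ⊕ κ) :=
  WithLp.toLp 2 (Sum.elim z w)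

/-!
Take `G(z, v) = f(z) + ∑_I c_I(z) v_I`, where `v ∈ ℂ^N` is split into blocks `v_I ∈ ℂ^m` indexed
by the maps `I : {1,…,k} → {1,…,n}`, and `c_I(z) = ∏_j (z_{I(j)} - (σ_j)_{I(j)})`. Each `c_I`
vanishes at every `σ_j`, so `G(σ_j, ·) ≡ f(σ_j)`. For `z ∉ σ` choose, for each `j`, a coordinate
`I(j)` in which `z` differs from `σ_j`; then `c_I(z) ≠ 0`, so the `v`-derivative
`v ↦ ∑_I c_I(z) v_I` is onto. The only analytic input is that `f` is holomorphic on the interior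
of `K`: there `f` is locally a uniform limit of holomorphic maps, and the Cauchy estimates make
their derivatives converge uniformly as well.
-/

open Metric Set Filter

section UniformLimit

variable {E G : Type*} [NormedAddCommGroup E] [NormedSpace ℂ E]
  [NormedAddCommGroup G] [NormedSpace ℂ G]

theorem norm_fderiv_le_of_norm_le_on_ball {h : E → G} {z : E} {ρ ε : ℝ} (hρ : 0 < ρ)
    (hd : DifferentiableOn ℂ h (ball z ρ)) (hb : ∀ w ∈ ball z ρ, ‖h w‖ ≤ ε) :
    ‖fderiv ℂ h z‖ ≤ 2 * ε / ρ := by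
  refine Complex.norm_fderiv_le_div_of_mapsTo_ball hd (fun w hw => ?_) hρ
  rw [mem_closedBall, dist_eq_norm]
  linarith [norm_sub_le (h w) (h z), hb w hw, hb z (mem_ball_self hρ)]

theorem uniformCauchySeqOn_fderiv {ι : Type*} {l : Filter ι} {F : ι → E → G} {x : E} {r : ℝ}
    (hr : 0 < r) (hF : ∀ i, DifferentiableOn ℂ (F i) (ball x r))
    (hc : UniformCauchySeqOn F l (ball x r)) :
    UniformCauchySeqOn (fun i => fderiv ℂ (F i)) l (ball x (r / 2)) := by
  intro u hu
  obtain ⟨ε, hε, hεu⟩ := Metric.mem_uniformity_dist.mp hu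
  filter_upwards [hc _ (dist_mem_uniformity (by positivity : 0 < ε * r / 8))] with i hi z hz
  have hsub : ball z (r / 2) ⊆ ball x r := fun w hw => by
    rw [mem_ball] at *
    linarith [dist_triangle w z x]
  have hzd : ∀ j, DifferentiableAt ℂ (F j) z := fun j =>
    (hF j).differentiableAt (isOpen_ball.mem_nhds (hsub (mem_ball_self (half_pos hr))))
  apply hεu
  rw [dist_eq_norm, ← fderiv_sub (hzd i.1) (hzd i.2)]
  calc ‖fderiv ℂ (F i.1 - F i.2) z‖ ≤ 2 * (ε * r / 8) / (r / 2) :=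
        norm_fderiv_le_of_norm_le_on_ball (half_pos hr) (((hF i.1).sub (hF i.2)).mono hsub)
          fun w hw => by simpa [dist_eq_norm] using (hi w (hsub hw)).le
    _ < ε := by field_simp; linarith

theorem differentiableAt_of_tendstoUniformlyOn_ball [CompleteSpace G] {ι : Type*}
    {l : Filter ι} [l.NeBot] {F : ι → E → G} {f : E → G} {x : E} {r : ℝ} (hr : 0 < r)
    (hF : ∀ i, DifferentiableOn ℂ (F i) (ball x r)) (hFf : TendstoUniformlyOn F f l (ball x r)) :
    DifferentiableAt ℂ f x := by
  have hc := uniformCauchySeqOn_fderiv hr hF hFf.uniformCauchySeqOn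
  have hsub : ball x (r / 2) ⊆ ball x r := ball_subset_ball (by linarith)
  have hlim : TendstoUniformlyOn (fun i => fderiv ℂ (F i))
      (fun z => limUnder l fun i => fderiv ℂ (F i) z) l (ball x (r / 2)) :=
    hc.tendstoUniformlyOn_of_tendsto fun z hz =>
      tendsto_nhds_limUnder (CompleteSpace.complete (hc.cauchy_map hz))
  refine (hasFDerivAt_of_tendstoUniformlyOn isOpen_ball hlim (fun i z hz => ?_)
    (fun z hz => hFf.tendsto_at (hsub hz)) (mem_ball_self (half_pos hr))).differentiableAt
  exact ((hF i).differentiableAt (isOpen_ball.mem_nhds (hsub hz))).hasFDerivAt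

end UniformLimit

theorem MemHloc.differentiableOn_interior {ι κ : Type*} [Fintype ι] [Fintype κ]
    {K : Set (EuclideanSpace ℂ ι)} {f : EuclideanSpace ℂ ι → EuclideanSpace ℂ κ}
    (hf : MemHloc K f) : DifferentiableOn ℂ f (interior K) := by
  intro z₀ hz₀
  obtain ⟨U, hU, hz₀U, happrox⟩ := hf.2 z₀ (interior_subset hz₀)
  obtain ⟨r, hr, hball⟩ := Metric.isOpen_iff.mp (isOpen_interior.inter hU) z₀ ⟨hz₀, hz₀U⟩
  have hsub : ball z₀ r ⊆ K ∩ closure U := fun w hw =>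
    ⟨interior_subset (hball hw).1, subset_closure (hball hw).2⟩
  have hseq : ∀ p : ℕ, ∃ g, DifferentiableOn ℂ g (ball z₀ r) ∧
      ∀ w ∈ ball z₀ r, dist (f w) (g w) < 1 / (p + 1) := fun p => by
    obtain ⟨W, -, hKW, g, hg, hgf⟩ := happrox (1 / (p + 1)) (by positivity)
    exact ⟨g, hg.mono (hsub.trans hKW), fun w hw => by
      simpa [dist_eq_norm'] using hgf w (hsub hw)⟩
  choose g hg hgf using hseq
  have hlim : TendstoUniformlyOn g f atTop (ball z₀ r) :=
    Metric.tendstoUniformlyOn_iff.mpr fun ε hε =>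
      (tendsto_one_div_add_atTop_nhds_zero_nat.eventually (gt_mem_nhds hε)).mono
        fun p hp w hw => (hgf p w hw).trans hp
  exact (differentiableAt_of_tendstoUniformlyOn_ball hr hg hlim).differentiableWithinAt

section Coefficients

variable {ι τ : Type*} [Fintype τ] (σ : τ → EuclideanSpace ℂ ι)

def sprayCoeff (I : τ → ι) (z : EuclideanSpace ℂ ι) : ℂ :=
  ∏ j, (z (I j) - σ j (I j))

theorem sprayCoeff_self (I : τ → ι) (j : τ) : sprayCoeff σ I (σ j) = 0 :=
  Finset.prod_eq_zero (Finset.mem_univ j) (sub_self _)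

theorem exists_sprayCoeff_ne_zero {z : EuclideanSpace ℂ ι} (hz : ∀ j, z ≠ σ j) :
    ∃ I, sprayCoeff σ I z ≠ 0 := by
  have hcoord : ∀ j, ∃ i, z i ≠ σ j i := fun j => by
    by_contra! h
    exact hz j (PiLp.ext h)
  choose I hI using hcoord
  exact ⟨I, Finset.prod_ne_zero_iff.mpr fun j _ => sub_ne_zero.mpr (hI j)⟩

theorem differentiable_sprayCoeff [Fintype ι] :
    Differentiable ℂ fun z => (sprayCoeff σ · z) :=
  differentiable_pi.mpr fun I => by
    unfold sprayCoeff
    fun_prop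

end Coefficients

section Blocks

variable {α κ ν : Type*} [Fintype κ] [Fintype ν] (e : α × κ ↪ ν)

def blockProj (I : α) : EuclideanSpace ℂ ν →L[ℂ] EuclideanSpace ℂ κ :=
  LinearMap.toContinuousLinearMap
    { toFun := fun v => WithLp.toLp 2 fun i => v (e (I, i))
      map_add' := fun _ _ => rfl
      map_smul' := fun _ _ => rfl }

@[simp]
theorem blockProj_apply (I : α) (v : EuclideanSpace ℂ ν) (i : κ) :
    blockProj e I v i = v (e (I, i)) := rfl

variable [Fintype α]

def blockComb (a : α → ℂ) : EuclideanSpace ℂ ν →L[ℂ] EuclideanSpace ℂ κ :=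
  ∑ I, a I • blockProj e I

theorem blockComb_surjective {a : α → ℂ} {I₀ : α} (ha : a I₀ ≠ 0) :
    Function.Surjective (blockComb e a) := by
  classical
  intro w
  let v : EuclideanSpace ℂ ν := WithLp.toLp 2 <|
    Function.extend e (fun p => if p.1 = I₀ then (a I₀)⁻¹ * w p.2 else 0) 0
  have hblock : ∀ I, blockProj e I v = if I = I₀ then (a I₀)⁻¹ • w else 0 := fun I => by
    ext i
    simp only [blockProj_apply, v, e.injective.extend_apply]
    split_ifs <;> simp
  exact ⟨v, by simp [blockComb, hblock, smul_smul, ha]⟩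

theorem differentiable_blockComb_comp {E : Type*} [NormedAddCommGroup E] [NormedSpace ℂ E]
    {c : E → α → ℂ} (hc : Differentiable ℂ c) :
    Differentiable ℂ fun p : E × EuclideanSpace ℂ ν => blockComb e (c p.1) p.2 := by
  unfold blockComb
  fun_prop

end Blocks

section Spray

variable {ι τ κ ν : Type*} [Fintype ι] [Fintype τ] [DecidableEq τ] [Fintype κ] [Fintype ν]
  (f : EuclideanSpace ℂ ι → EuclideanSpace ℂ κ) (σ : τ → EuclideanSpace ℂ ι)
  (e : (τ → ι) × κ ↪ ν)

def spray (z : EuclideanSpace ℂ ι) (v : EuclideanSpace ℂ ν) : EuclideanSpace ℂ κ :=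
  f z + blockComb e (sprayCoeff σ · z) v

theorem spray_zero (z : EuclideanSpace ℂ ι) : spray f σ e z 0 = f z := by
  simp [spray]

theorem spray_center (j : τ) (v : EuclideanSpace ℂ ν) : spray f σ e (σ j) v = f (σ j) := by
  simp [spray, sprayCoeff_self, blockComb]

theorem hasFDerivAt_spray (z : EuclideanSpace ℂ ι) (v : EuclideanSpace ℂ ν) :
    HasFDerivAt (spray f σ e z) (blockComb e (sprayCoeff σ · z)) v :=
  (blockComb e _).hasFDerivAt.const_add (f z)

theorem surjective_fderiv_spray {z : EuclideanSpace ℂ ι} (hz : ∀ j, z ≠ σ j)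
    (v : EuclideanSpace ℂ ν) : Function.Surjective (fderiv ℂ (spray f σ e z) v) := by
  obtain ⟨I, hI⟩ := exists_sprayCoeff_ne_zero σ hz
  rw [(hasFDerivAt_spray f σ e z v).fderiv]
  exact blockComb_surjective e hI

theorem continuousOn_spray {s : Set (EuclideanSpace ℂ ι)} (hf : ContinuousOn f s) :
    ContinuousOn (fun p => spray f σ e p.1 p.2) (s ×ˢ univ) :=
  (hf.comp continuousOn_fst fun _ hp => hp.1).add
    (differentiable_blockComb_comp e (differentiable_sprayCoeff σ)).continuous.continuousOn

theorem differentiableOn_spray {s : Set (EuclideanSpace ℂ ι)} (hf : DifferentiableOn ℂ f s) :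
    DifferentiableOn ℂ (fun p => spray f σ e p.1 p.2) (s ×ˢ univ) :=
  (hf.comp differentiableOn_fst fun _ hp => hp.1).add
    (differentiable_blockComb_comp e (differentiable_sprayCoeff σ)).differentiableOn

end Spray

theorem exists_spray_general
    {n m k : ℕ} (K : Set (EuclideanSpace ℂ (Fin n)))
    (f : EuclideanSpace ℂ (Fin n) → EuclideanSpace ℂ (Fin m)) (hf : MemHloc K f)
    (σ : Fin k → EuclideanSpace ℂ (Fin n)) :
    ∃ N : ℕ, 1 ≤ N ∧
      ∃ V : Set (EuclideanSpace ℂ (Fin N)), IsOpen V ∧ (0 : EuclideanSpace ℂ (Fin N)) ∈ V ∧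
        ∃ G : EuclideanSpace ℂ (Fin n) → EuclideanSpace ℂ (Fin N) → EuclideanSpace ℂ (Fin m),
          -- (1) regularity: `G ∈ A(K × V, ℂ^m)` and `G(z, ·)` is holomorphic on `V`
          ContinuousOn (fun p => G p.1 p.2) (K ×ˢ V) ∧
          DifferentiableOn ℂ
            (fun p : EuclideanSpace ℂ (Fin n) × EuclideanSpace ℂ (Fin N) => G p.1 p.2)
            (interior K ×ˢ V) ∧
          (∀ z ∈ K, DifferentiableOn ℂ (G z) V) ∧
          -- (2) `G(·, 0) = f` and `G` is constant in `v` at the exceptional points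
          (∀ z ∈ K, G z 0 = f z) ∧
          (∀ j, ∀ v ∈ V, G (σ j) v = f (σ j)) ∧
          -- (3) domination: `∂ᵥ G(z, v)` is surjective off the exceptional set
          (∀ z ∈ K, (∀ j, z ≠ σ j) → ∀ v ∈ V,
            Function.Surjective ⇑(fderiv ℂ (G z) v)) := by
  -- the spare last coordinate only serves to make `N ≥ 1`
  let e : (Fin k → Fin n) × Fin m ↪ Fin (Fintype.card ((Fin k → Fin n) × Fin m) + 1) :=
    (Fintype.equivFin _).toEmbedding.trans Fin.castSuccEmb
  refine ⟨_, Nat.le_add_left 1 _, univ, isOpen_univ, mem_univ 0, spray f σ e,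
    continuousOn_spray f σ e hf.1, differentiableOn_spray f σ e hf.differentiableOn_interior,
    fun z _ v _ => (hasFDerivAt_spray f σ e z v).differentiableAt.differentiableWithinAt,
    fun z _ => spray_zero f σ e z, fun j v _ => spray_center f σ e j v,
    fun z _ hz v _ => surjective_fderiv_spray f σ e hz v⟩

/-- **Theorem 4.6** of Poletsky: existence of sprays. If `K ⊆ ℂ^n` is compact with a
basis of Stein neighborhoods, `f ∈ H_loc(K, ℂ^m)` and `σ₁, …, σ_k` is a finite set in
`K`, then there is a spray `G : K × V → ℂ^m`, `V ⊆ ℂ^N` an open neighborhood of `0`,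
with exceptional set `σ`, such that `G(·, 0) = f`, `G(σ j, ·) ≡ f(σ j)`, and the
domination condition: for `z ∈ K \ σ` the partial differential `∂ᵥG(z, v) : ℂ^N → ℂ^m`
is surjective. -/
theorem exists_spray
    {n m k : ℕ} (K : Set (EuclideanSpace ℂ (Fin n))) (hK : IsCompact K)
    (hKb : HasSteinBasis K)
    (f : EuclideanSpace ℂ (Fin n) → EuclideanSpace ℂ (Fin m)) (hf : MemHloc K f)
    (σ : Fin k → EuclideanSpace ℂ (Fin n)) (hσK : ∀ j, σ j ∈ K) :
    ∃ N : ℕ, 1 ≤ N ∧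
      ∃ V : Set (EuclideanSpace ℂ (Fin N)), IsOpen V ∧ (0 : EuclideanSpace ℂ (Fin N)) ∈ V ∧
        ∃ G : EuclideanSpace ℂ (Fin n) → EuclideanSpace ℂ (Fin N) → EuclideanSpace ℂ (Fin m),
          -- (1) regularity: `G ∈ A(K × V, ℂ^m)` and `G(z, ·)` is holomorphic on `V`
          ContinuousOn (fun p => G p.1 p.2) (K ×ˢ V) ∧
          DifferentiableOn ℂ
            (fun p : EuclideanSpace ℂ (Fin n) × EuclideanSpace ℂ (Fin N) => G p.1 p.2)
            (interior K ×ˢ V) ∧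
          (∀ z ∈ K, DifferentiableOn ℂ (G z) V) ∧
          -- (2) `G(·, 0) = f` and `G` is constant in `v` at the exceptional points
          (∀ z ∈ K, G z 0 = f z) ∧
          (∀ j, ∀ v ∈ V, G (σ j) v = f (σ j)) ∧
          -- (3) domination: `∂ᵥ G(z, v)` is surjective off the exceptional set
          (∀ z ∈ K, (∀ j, z ≠ σ j) → ∀ v ∈ V,
            Function.Surjective ⇑(fderiv ℂ (G z) v)) :=
  exists_spray_general K f hf σ
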